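/- Let e₁,…,e₆ be the standard basis of ℝ⁶, let uᵢ = 3eᵢ − e₁ − e₂ − e₃ and vᵢ = 3eᵢ − e₄ − e₅ − e₆ for 1 ≤ i ≤ 6, and let ⟨·,·⟩ be the standard inner product on ℝ⁶. Then {m ∈ ℝ⁶ : ⟨uᵢ, m⟩ ≥ 0 for all 1 ≤ i ≤ 6, and ⟨vᵢ, m⟩ ≥ −1 for all 1 ≤ i ≤ 6} = { c + t·(1,1,1,1,1,1) : c ∈ convexHull ℝ {0, e₄, e₅, e₆}, t ∈ ℝ }. -/
import Mathlib


/-- standard basis of ℝ⁶ -/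
noncomputable def e6 (i : Fin 6) : Fin 6 → ℝ := Pi.single i 1

/-- uᵢ = 3eᵢ − e₁ − e₂ − e₃ -/
noncomputable def uvec (i : Fin 6) : Fin 6 → ℝ := (3 : ℝ) • e6 i - e6 0 - e6 1 - e6 2

/-- vᵢ = 3eᵢ − e₄ − e₅ − e₆ -/
noncomputable def vvec (i : Fin 6) : Fin 6 → ℝ := (3 : ℝ) • e6 i - e6 3 - e6 4 - e6 5

lemma usum (i : Fin 6) (m : Fin 6 → ℝ) :
    ∑ j, uvec i j * m j = 3 * m i - (m 0 + m 1 + m 2) := by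
  simp only [uvec, e6, Fin.sum_univ_six, Pi.sub_apply, Pi.smul_apply, smul_eq_mul]
  fin_cases i <;> simp [Pi.single_apply] <;> ring

lemma vsum (i : Fin 6) (m : Fin 6 → ℝ) :
    ∑ j, vvec i j * m j = 3 * m i - (m 3 + m 4 + m 5) := by
  simp only [vvec, e6, Fin.sum_univ_six, Pi.sub_apply, Pi.smul_apply, smul_eq_mul]
  fin_cases i <;> simp [Pi.single_apply] <;> ring

/-- the "slab" containing the simplex -/
def Sset : Set (Fin 6 → ℝ) :=
  {y | y 0 = 0 ∧ y 1 = 0 ∧ y 2 = 0 ∧ 0 ≤ y 3 ∧ 0 ≤ y 4 ∧ 0 ≤ y 5 ∧ y 3 + y 4 + y 5 ≤ 1}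

lemma Sset_convex : Convex ℝ Sset := by
  rintro x hx y hy a b ha hb hab
  obtain ⟨hx0, hx1, hx2, hx3, hx4, hx5, hxs⟩ := hx
  obtain ⟨hy0, hy1, hy2, hy3, hy4, hy5, hys⟩ := hy
  simp only [Sset, Set.mem_setOf_eq, Pi.add_apply, Pi.smul_apply, smul_eq_mul]
  refine ⟨by rw [hx0, hy0]; ring, by rw [hx1, hy1]; ring, by rw [hx2, hy2]; ring,
    ?_, ?_, ?_, ?_⟩
  · positivity
  · positivity
  · positivity
  · nlinarith

lemma hull_sub : convexHull ℝ ({0, e6 3, e6 4, e6 5} : Set (Fin 6 → ℝ)) ⊆ Sset := by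
  apply convexHull_min _ Sset_convex
  rintro y (rfl | rfl | rfl | rfl) <;>
    simp [Sset, e6, Pi.single_apply]

lemma mem_hull (a b c : ℝ) (ha : 0 ≤ a) (hb : 0 ≤ b) (hc : 0 ≤ c) (habc : a + b + c ≤ 1) :
    a • e6 3 + b • e6 4 + c • e6 5 ∈
      convexHull ℝ ({0, e6 3, e6 4, e6 5} : Set (Fin 6 → ℝ)) := by
  have h := convex_convexHull ℝ ({0, e6 3, e6 4, e6 5} : Set (Fin 6 → ℝ))
  have key := h.sum_mem (t := (Finset.univ : Finset (Fin 4)))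
    (w := ![1 - (a + b + c), a, b, c]) (z := ![0, e6 3, e6 4, e6 5])
    (by intro i _; fin_cases i <;> simp <;> linarith)
    (by simp [Fin.sum_univ_four]; ring)
    (by intro i _; fin_cases i <;> exact subset_convexHull ℝ _ (by simp))
  simpa [Fin.sum_univ_four] using key

theorem stmt_4 :
    {m : Fin 6 → ℝ | (∀ i, 0 ≤ ∑ j, uvec i j * m j) ∧ (∀ i, -1 ≤ ∑ j, vvec i j * m j)} =
    {x : Fin 6 → ℝ | ∃ c ∈ convexHull ℝ ({0, e6 3, e6 4, e6 5} : Set (Fin 6 → ℝ)),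
      ∃ t : ℝ, x = c + t • (fun _ => (1 : ℝ))} := by
  ext m
  simp only [Set.mem_setOf_eq, usum, vsum]
  constructor
  · rintro ⟨hu, hv⟩
    have h0 := hu 0
    have h1 := hu 1
    have h2 := hu 2
    have h3 := hu 3
    have h4 := hu 4
    have h5 := hu 5
    have hv0 := hv 0
    have e01 : m 0 = m 1 := by linarith
    have e02 : m 0 = m 2 := by linarith
    refine ⟨(m 3 - m 0) • e6 3 + (m 4 - m 0) • e6 4 + (m 5 - m 0) • e6 5,
      mem_hull _ _ _ (by linarith) (by linarith) (by linarith) (by linarith), m 0, ?_⟩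
    funext j
    fin_cases j <;> simp [e6, Pi.single_apply] <;> linarith
  · rintro ⟨c, hc, t, rfl⟩
    obtain ⟨hc0, hc1, hc2, hc3, hc4, hc5, hcs⟩ := hull_sub hc
    have hnn : ∀ i : Fin 6, 0 ≤ c i := by
      intro i
      fin_cases i
      · exact le_of_eq hc0.symm
      · exact le_of_eq hc1.symm
      · exact le_of_eq hc2.symm
      · exact hc3
      · exact hc4
      · exact hc5
    simp only [Pi.add_apply, Pi.smul_apply, smul_eq_mul, mul_one]
    constructor <;> intro i <;> (try simp only [hc0, hc1, hc2]) <;>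
      have := hnn i <;> linarith
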